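/- If X is xgamma distributed with parameter θ > 0, then E[X²] = 2(θ+6)/(θ²(1+θ)). -/

import Mathlib

open MeasureTheory Real

/-! The density is a mixture of the Gamma(1, θ) and Gamma(3, θ) densities, so `E[X²]` is a
combination of the Gamma moments `∫₀^∞ xⁿ e^{-θx} dx = n! / θⁿ⁺¹` for `n = 2, 4`. -/

theorem integrableOn_pow_mul_exp_neg_mul_Ioi (n : ℕ) {r : ℝ} (hr : 0 < r) :
    IntegrableOn (fun x : ℝ => x ^ n * exp (-r * x)) (Set.Ioi 0) := by
  have h := integrableOn_rpow_mul_exp_neg_mul_rpow (p := 1) (s := n)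
    (neg_one_lt_zero.trans_le n.cast_nonneg) one_pos hr
  simpa only [rpow_one, rpow_natCast] using h

theorem integral_pow_mul_exp_neg_mul_Ioi (n : ℕ) {r : ℝ} (hr : 0 < r) :
    ∫ x in Set.Ioi (0 : ℝ), x ^ n * exp (-r * x) = n.factorial / r ^ (n + 1) := by
  have h := integral_rpow_mul_exp_neg_mul_Ioi (a := n + 1) n.cast_add_one_pos hr
  rw [add_sub_cancel_right, Gamma_nat_eq_factorial, ← Nat.cast_add_one, rpow_natCast,
    one_div_pow, one_div_mul_eq_div] at h
  simpa only [rpow_natCast, neg_mul] using h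

theorem xgamma_second_moment (θ : ℝ) (hθ : 0 < θ) :
    ∫ x in Set.Ioi (0:ℝ), x^2 * ((θ^2 / (1 + θ)) * (1 + (θ/2) * x^2) * Real.exp (-θ * x)) =
      2 * (θ + 6) / (θ^2 * (1 + θ)) := by
  have hmix : ∀ x : ℝ, x^2 * ((θ^2 / (1 + θ)) * (1 + (θ/2) * x^2) * Real.exp (-θ * x)) =
      θ^2 / (1 + θ) * (x^2 * exp (-θ * x)) + θ^3 / (2 * (1 + θ)) * (x^4 * exp (-θ * x)) := by
    intro x
    field_simp
  simp_rw [hmix]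
  rw [integral_add ((integrableOn_pow_mul_exp_neg_mul_Ioi 2 hθ).const_mul _)
      ((integrableOn_pow_mul_exp_neg_mul_Ioi 4 hθ).const_mul _),
    integral_const_mul, integral_const_mul, integral_pow_mul_exp_neg_mul_Ioi 2 hθ,
    integral_pow_mul_exp_neg_mul_Ioi 4 hθ]
  norm_num [Nat.factorial]
  field_simp
  ring
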